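/- arXiv:1704.01629 — 4 statements merged into one kernel-verified Lean document; each statement's English description precedes it below -/
import Mathlib

section
/- Let {S_1, …, S_m} be a partition of {1, …, n} with m ≥ 2, and let f = Σ_{i=1}^m ∏_{j∈S_i} x_j in K[x_1, …, x_n] over an algebraically closed field K. Then for every weight vector w ∈ R^n, the initial form In_w(f) (the sum of terms of f whose w-weight is minimal) is an irreducible polynomial whenever it has at least two terms, and in particular every initial ideal In_w(⟨f⟩) containing no monomial is prime. -/
open MvPolynomial

/-- The weight `w · α` of an exponent vector. -/
noncomputable def wt {n : ℕ} (w : Fin n → ℝ) (α : Fin n →₀ ℕ) : ℝ :=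
  ∑ j, w j * (α j : ℝ)

/-- The initial form of a polynomial: the sum of its terms of minimal `w`-weight. -/
noncomputable def initialForm {K : Type*} [CommSemiring K] {n : ℕ} (w : Fin n → ℝ)
    (f : MvPolynomial (Fin n) K) : MvPolynomial (Fin n) K :=
  ∑ α ∈ f.support.filter (fun α => ∀ β ∈ f.support, wt w α ≤ wt w β),
    monomial α (coeff α f)

/-- The initial ideal `In_w(I)`. -/
noncomputable def initialIdeal {K : Type*} [CommSemiring K] {n : ℕ} (w : Fin n → ℝ)
    (I : Ideal (MvPolynomial (Fin n) K)) : Ideal (MvPolynomial (Fin n) K) :=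
  Ideal.span (initialForm w '' (I : Set (MvPolynomial (Fin n) K)))

/-!
The initial form of `f` is again a sum `∑_{i ∈ T} ∏_{j ∈ S_i} x_j`, over the indices `T` of
minimal weight. If it has at least two terms, pick `k ∈ S_{i₀}` and write it as `x_k * a + b`,
where neither `a = ∏_{j ∈ S_{i₀} \ {k}} x_j` nor `b` involves `x_k`, and no variable of `a` divides
`b ≠ 0`. Thus it is of degree one in `x_k` with coprime coefficients, hence irreducible.
Since `In_w(g h) = In_w(g) In_w(h)` over a domain, `In_w(⟨f⟩) = ⟨In_w(f)⟩`, which is prime unless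
`In_w(f)` is a single term.
-/

namespace MvPolynomial

section LinearInOneVariable

variable {σ R : Type*} [CommRing R] [DecidableEq σ]

/-- `p` as a polynomial in `X k`. The coefficients are not restricted to the other variables, so
this is only a section of `Polynomial.aeval (X k)`, which is enough to pull back irreducibility. -/
noncomputable def polynomialIn (k : σ) : MvPolynomial σ R →ₐ[R] Polynomial (MvPolynomial σ R) :=
  aeval (Function.update (fun j => Polynomial.C (X j)) k Polynomial.X)

@[simp]
lemma polynomialIn_X_self (k : σ) : polynomialIn k (X k : MvPolynomial σ R) = Polynomial.X := by
  simp [polynomialIn]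

lemma polynomialIn_of_notMem_vars {k : σ} {p : MvPolynomial σ R} (hk : k ∉ p.vars) :
    polynomialIn k p = Polynomial.C p := by
  refine hom_congr_vars (f₁ := (polynomialIn k).toRingHom) (f₂ := Polynomial.C) ?_ ?_ rfl
  · ext; simp [polynomialIn]
  · intro j hj _
    simp [polynomialIn, Function.update_of_ne (ne_of_mem_of_not_mem hj hk)]

lemma leftInverse_polynomialIn (k : σ) :
    Function.LeftInverse (Polynomial.aeval (X k)) (polynomialIn (R := R) k) := by
  suffices h : (Polynomial.aeval (X k : MvPolynomial σ R)).toRingHom.comp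
      (polynomialIn k).toRingHom = RingHom.id _ from RingHom.congr_fun h
  refine ringHom_ext (fun r => by simp [polynomialIn]) fun j => ?_
  rcases eq_or_ne j k with rfl | hj
  · simp
  · simp [polynomialIn, Function.update_of_ne hj]

lemma not_X_dvd_of_notMem_vars {k : σ} {b : MvPolynomial σ R} (hb : b ≠ 0) (hk : k ∉ b.vars) :
    ¬ X k ∣ b := by
  rintro ⟨q, hq⟩
  have := congrArg (fun p => Polynomial.coeff (polynomialIn k p) 0) hq
  simp [polynomialIn_of_notMem_vars hk] at this
  exact hb this

theorem irreducible_X_mul_add [IsDomain R] {k : σ} {a b : MvPolynomial σ R}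
    (hka : k ∉ a.vars) (hkb : k ∉ b.vars) (ha : a ≠ 0) (hab : IsRelPrime a b) :
    Irreducible (X k * a + b) := by
  have := isLocalHom_of_leftInverse _ (leftInverse_polynomialIn (R := R) k)
  refine Irreducible.of_map (f := polynomialIn k) ?_
  rw [map_add, map_mul, polynomialIn_X_self, polynomialIn_of_notMem_vars hka,
    polynomialIn_of_notMem_vars hkb, mul_comm]
  exact Polynomial.irreducible_C_mul_X_add_C ha hab

end LinearInOneVariable

section SumOfProducts

variable {σ ι R : Type*} [CommRing R]

lemma prod_X_eq_monomial (s : Finset σ) :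
    ∏ j ∈ s, (X j : MvPolynomial σ R) = monomial (∑ j ∈ s, Finsupp.single j 1) 1 := by
  rw [monomial_sum_one]
  rfl

lemma card_support_monomial_le_one (α : σ →₀ ℕ) (c : R) : (monomial α c).support.card ≤ 1 :=
  (Finset.card_le_card support_monomial_subset).trans (Finset.card_singleton α).le

lemma vars_prod_X_subset [DecidableEq σ] [Nontrivial R] (s : Finset σ) :
    (∏ j ∈ s, (X j : MvPolynomial σ R)).vars ⊆ s :=
  (vars_prod _).trans <| Finset.biUnion_subset.mpr fun j hj => by
    rw [vars_X]
    exact Finset.singleton_subset_iff.mpr hj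

theorem irreducible_sum_prod_X [IsDomain R] [UniqueFactorizationMonoid R] (S : ι → Finset σ)
    {T : Finset ι} (hdisj : (T : Set ι).PairwiseDisjoint S)
    (hcard : 2 ≤ (∑ i ∈ T, ∏ j ∈ S i, (X j : MvPolynomial σ R)).support.card) :
    Irreducible (∑ i ∈ T, ∏ j ∈ S i, (X j : MvPolynomial σ R)) := by
  classical
  obtain ⟨i₀, hi₀, k, hk⟩ : ∃ i ∈ T, (S i).Nonempty := by
    by_contra! hempty
    rw [Finset.sum_congr rfl fun i hi => by rw [hempty i hi, Finset.prod_empty],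
      Finset.sum_const, nsmul_one, ← map_natCast C, C_apply] at hcard
    exact hcard.not_gt (Nat.lt_succ_of_le (card_support_monomial_le_one _ _))
  set A := ∏ j ∈ (S i₀).erase k, (X j : MvPolynomial σ R)
  set B := ∑ i ∈ T.erase i₀, ∏ j ∈ S i, (X j : MvPolynomial σ R)
  have hsplit : ∑ i ∈ T, ∏ j ∈ S i, (X j : MvPolynomial σ R) = X k * A + B := by
    rw [← Finset.add_sum_erase _ _ hi₀, ← Finset.mul_prod_erase _ _ hk]
  have hB : B ≠ 0 := by
    intro hB
    rw [hsplit, hB, add_zero, Finset.mul_prod_erase _ _ hk, prod_X_eq_monomial] at hcard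
    exact hcard.not_gt (Nat.lt_succ_of_le (card_support_monomial_le_one _ _))
  have hvarsB : ∀ j ∈ S i₀, j ∉ B.vars := by
    intro j hj hjB
    obtain ⟨i, hi, hji⟩ := Finset.mem_biUnion.mp (vars_sum_subset _ _ hjB)
    exact Finset.disjoint_left.mp (hdisj (Finset.mem_of_mem_erase hi) hi₀
      (Finset.ne_of_mem_erase hi)) (vars_prod_X_subset _ hji) hj
  rw [hsplit]
  refine irreducible_X_mul_add (fun hkA => ?_) (hvarsB k hk)
    (Finset.prod_ne_zero_iff.mpr fun j _ => X_ne_zero j) ?_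
  · exact Finset.notMem_erase k (S i₀) (vars_prod_X_subset _ hkA)
  · exact IsRelPrime.prod_left fun j hj => X_prime.irreducible.isRelPrime_iff_not_dvd.mpr <|
      not_X_dvd_of_notMem_vars hB (hvarsB j (Finset.mem_of_mem_erase hj))

end SumOfProducts

lemma isPrime_span_singleton_of_forall_monomial_notMem {K σ : Type*} [Field K]
    {g : MvPolynomial σ K} (hirr : 2 ≤ g.support.card → Irreducible g)
    (hmon : ¬ ∃ α : σ →₀ ℕ, monomial α (1 : K) ∈ Ideal.span {g}) :
    (Ideal.span {g}).IsPrime := by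
  classical
  obtain h | h | h : g.support.card = 0 ∨ g.support.card = 1 ∨ 2 ≤ g.support.card := by omega
  · rw [Finset.card_eq_zero, support_eq_empty] at h
    rw [h, Ideal.span_singleton_eq_bot.mpr rfl]
    exact Ideal.isPrime_bot
  · obtain ⟨α, hα⟩ := Finset.card_eq_one.mp h
    have hg := eq_monomial_of_support_subset_singleton fun d hd =>
      Finset.mem_singleton.mp (hα ▸ hd)
    have hc : coeff α g ≠ 0 := mem_support_iff.mp (hα ▸ Finset.mem_singleton_self α)
    refine absurd ⟨α, Ideal.mem_span_singleton'.mpr ⟨C (coeff α g)⁻¹, ?_⟩⟩ hmon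
    rw [hg, C_mul_monomial, coeff_monomial, if_pos rfl, inv_mul_cancel₀ hc]
  · exact (Ideal.span_singleton_prime (hirr h).ne_zero).mpr (hirr h).prime

end MvPolynomial

section InitialForm

variable {R : Type*} {n : ℕ} (w : Fin n → ℝ)

lemma wt_add (α β : Fin n →₀ ℕ) : wt w (α + β) = wt w α + wt w β := by
  simp only [wt, Finsupp.coe_add, Pi.add_apply, Nat.cast_add, mul_add, Finset.sum_add_distrib]

variable [CommSemiring R]

lemma exists_wt_eq_add_of_mem_support_mul {p q : MvPolynomial (Fin n) R}
    {α : Fin n →₀ ℕ} (hα : α ∈ (p * q).support) :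
    ∃ u ∈ p.support, ∃ v ∈ q.support, wt w α = wt w u + wt w v := by
  obtain ⟨u, hu, v, hv, rfl⟩ := Finset.mem_add.mp (support_mul p q hα)
  exact ⟨u, hu, v, hv, wt_add w u v⟩

@[simp]
lemma initialForm_zero : initialForm w (0 : MvPolynomial (Fin n) R) = 0 := by
  simp [initialForm]

lemma coeff_initialForm (p : MvPolynomial (Fin n) R) (β : Fin n →₀ ℕ) :
    coeff β (initialForm w p) =
      if ∀ γ ∈ p.support, wt w β ≤ wt w γ then coeff β p else 0 := by
  classical
  simp only [initialForm, coeff_sum, coeff_monomial, Finset.sum_ite_eq', Finset.mem_filter]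
  by_cases hβ : β ∈ p.support <;> simp_all

lemma mem_support_initialForm {p : MvPolynomial (Fin n) R} {β : Fin n →₀ ℕ} :
    β ∈ (initialForm w p).support ↔ β ∈ p.support ∧ ∀ γ ∈ p.support, wt w β ≤ wt w γ := by
  rw [mem_support_iff, coeff_initialForm, mem_support_iff]
  split_ifs with h
  · exact (and_iff_left h).symm
  · exact iff_of_false (not_not_intro rfl) fun h' => h h'.2

variable {w} {p : MvPolynomial (Fin n) R} {α₀ : Fin n →₀ ℕ}

lemma initialForm_ne_zero (hp : p ≠ 0) : initialForm w p ≠ 0 := by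
  obtain ⟨α₀, hα₀, hmin⟩ := p.support.exists_min_image (wt w) (support_nonempty.mpr hp)
  exact ne_zero_iff.mpr ⟨α₀, mem_support_iff.mp (mem_support_initialForm w |>.mpr ⟨hα₀, hmin⟩)⟩

lemma wt_eq_of_mem_support_initialForm (hα₀ : α₀ ∈ p.support)
    (hmin : ∀ β ∈ p.support, wt w α₀ ≤ wt w β) {α : Fin n →₀ ℕ}
    (hα : α ∈ (initialForm w p).support) : wt w α = wt w α₀ := by
  rw [mem_support_initialForm] at hα
  exact le_antisymm (hα.2 α₀ hα₀) (hmin α hα.1)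

lemma initialForm_add_of_lt {q : MvPolynomial (Fin n) R} {c : ℝ} (hp : p ≠ 0)
    (hpc : ∀ α ∈ p.support, wt w α = c) (hqc : ∀ α ∈ q.support, c < wt w α) :
    initialForm w (p + q) = p := by
  have hq : ∀ α ∈ p.support, coeff α q = 0 := fun α hα =>
    notMem_support_iff.mp fun hαq => (hqc α hαq).ne' (hpc α hα)
  have hmin : ∀ α ∈ (p + q).support, c ≤ wt w α := fun α hα =>
    (Finset.mem_union.mp (support_add hα)).elim (fun h => (hpc α h).ge) fun h => (hqc α h).le
  obtain ⟨α₀, hα₀⟩ := support_nonempty.mpr hp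
  have hα₀' : α₀ ∈ (p + q).support := by
    rwa [mem_support_iff, coeff_add, hq α₀ hα₀, add_zero, ← mem_support_iff]
  ext β
  rw [coeff_initialForm]
  split_ifs with hβ
  · by_cases hβp : β ∈ p.support
    · rw [coeff_add, hq β hβp, add_zero]
    · rw [coeff_add, notMem_support_iff.mp hβp, zero_add]
      by_contra hβq
      exact (hqc β (mem_support_iff.mpr hβq)).not_ge ((hβ α₀ hα₀').trans (hpc α₀ hα₀).le)
  · by_contra hβp
    refine hβ fun γ hγ => ?_
    rw [hpc β (mem_support_iff.mpr (Ne.symm hβp))]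
    exact hmin γ hγ

lemma initialForm_sum_monomial {ι : Type*} (s : Finset ι) (e : ι → Fin n →₀ ℕ) (c : ι → R) :
    initialForm w (∑ i ∈ s, monomial (e i) (c i)) =
      ∑ i ∈ s with ∀ γ ∈ (∑ i ∈ s, monomial (e i) (c i)).support, wt w (e i) ≤ wt w γ,
        monomial (e i) (c i) := by
  classical
  ext β
  simp only [coeff_initialForm, coeff_sum, coeff_monomial]
  rw [Finset.sum_filter]
  split_ifs with h
  · refine Finset.sum_congr rfl fun i _ => ?_
    split_ifs <;> subst_vars <;> simp_all
  · refine (Finset.sum_eq_zero fun i _ => ?_).symm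
    rcases eq_or_ne (e i) β with rfl | hi
    · rw [if_neg h]
    · simp [hi]

end InitialForm

section InitialFormRing

variable {R : Type*} [CommRing R] {n : ℕ} {w : Fin n → ℝ}

lemma lt_wt_of_mem_support_sub_initialForm {p : MvPolynomial (Fin n) R} {α₀ : Fin n →₀ ℕ}
    (hmin : ∀ β ∈ p.support, wt w α₀ ≤ wt w β) {α : Fin n →₀ ℕ}
    (hα : α ∈ (p - initialForm w p).support) : wt w α₀ < wt w α := by
  rw [mem_support_iff, coeff_sub, coeff_initialForm] at hα
  split_ifs at hα with h
  · exact absurd (sub_self _) hα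
  · push Not at h
    obtain ⟨γ, hγ, hlt⟩ := h
    exact (hmin γ hγ).trans_lt hlt

variable (w) [IsDomain R]

theorem initialForm_mul (p q : MvPolynomial (Fin n) R) :
    initialForm w (p * q) = initialForm w p * initialForm w q := by
  rcases eq_or_ne p 0 with rfl | hp
  · simp
  rcases eq_or_ne q 0 with rfl | hq
  · simp
  obtain ⟨α₀, hα₀, hpmin⟩ := p.support.exists_min_image (wt w) (support_nonempty.mpr hp)
  obtain ⟨β₀, hβ₀, hqmin⟩ := q.support.exists_min_image (wt w) (support_nonempty.mpr hq)
  -- the second summand only has terms of weight `> wt w α₀ + wt w β₀`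
  have hsplit : p * q = initialForm w p * initialForm w q +
      (initialForm w p * (q - initialForm w q) + (p - initialForm w p) * q) := by ring
  rw [hsplit]
  refine initialForm_add_of_lt (c := wt w α₀ + wt w β₀)
    (mul_ne_zero (initialForm_ne_zero hp) (initialForm_ne_zero hq)) (fun α hα => ?_) fun α hα => ?_
  · obtain ⟨u, hu, v, hv, h⟩ := exists_wt_eq_add_of_mem_support_mul w hα
    rw [h, wt_eq_of_mem_support_initialForm hα₀ hpmin hu,
      wt_eq_of_mem_support_initialForm hβ₀ hqmin hv]
  · rcases Finset.mem_union.mp (support_add hα) with h | h <;>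
      obtain ⟨u, hu, v, hv, h⟩ := exists_wt_eq_add_of_mem_support_mul w h
    · linarith [wt_eq_of_mem_support_initialForm hα₀ hpmin hu,
        lt_wt_of_mem_support_sub_initialForm hqmin hv]
    · linarith [lt_wt_of_mem_support_sub_initialForm hpmin hu, hqmin v hv]

theorem initialIdeal_span_singleton (f : MvPolynomial (Fin n) R) :
    initialIdeal w (Ideal.span {f}) = Ideal.span {initialForm w f} := by
  refine le_antisymm (Ideal.span_le.mpr ?_) (Ideal.span_le.mpr ?_)
  · rintro _ ⟨g, hg, rfl⟩
    obtain ⟨h, rfl⟩ := Ideal.mem_span_singleton.mp hg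
    rw [initialForm_mul]
    exact Ideal.mem_span_singleton.mpr (dvd_mul_right _ _)
  · rw [Set.singleton_subset_iff]
    exact Ideal.subset_span ⟨f, Ideal.mem_span_singleton_self f, rfl⟩

end InitialFormRing

theorem stmt1_general {K : Type*} [Field K] {n m : ℕ}
    (S : Fin m → Finset (Fin n))
    (hdisj : ∀ i j : Fin m, i ≠ j → Disjoint (S i) (S j))
    (f : MvPolynomial (Fin n) K)
    (hf : f = ∑ i : Fin m, ∏ j ∈ S i, (X j : MvPolynomial (Fin n) K))
    (w : Fin n → ℝ) :
    (2 ≤ (initialForm w f).support.card → Irreducible (initialForm w f)) ∧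
    ((¬ ∃ α : Fin n →₀ ℕ, monomial α (1 : K) ∈ initialIdeal w (Ideal.span {f})) →
      (initialIdeal w (Ideal.span {f})).IsPrime) := by
  have hirr : 2 ≤ (initialForm w f).support.card → Irreducible (initialForm w f) := by
    simp_rw [hf, prod_X_eq_monomial, initialForm_sum_monomial, ← prod_X_eq_monomial]
    exact irreducible_sum_prod_X S fun i _ j _ hij => hdisj i j hij
  refine ⟨hirr, fun hmon => ?_⟩
  rw [initialIdeal_span_singleton] at hmon ⊢
  exact isPrime_span_singleton_of_forall_monomial_notMem hirr hmon

/-- For `f = Σ_{i=1}^m ∏_{j ∈ S_i} x_j` with `{S_i}` a partition of `[n]` and `m ≥ 2`,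
every initial form of `f` with at least two terms is irreducible, and every initial ideal
of `⟨f⟩` containing no monomial is prime. -/
theorem stmt1 {K : Type*} [Field K] [IsAlgClosed K] {n m : ℕ} (hm : 2 ≤ m)
    (S : Fin m → Finset (Fin n))
    (hdisj : ∀ i j : Fin m, i ≠ j → Disjoint (S i) (S j))
    (hcover : ∀ k : Fin n, ∃ i : Fin m, k ∈ S i)
    (hne : ∀ i : Fin m, (S i).Nonempty)
    (f : MvPolynomial (Fin n) K)
    (hf : f = ∑ i : Fin m, ∏ j ∈ S i, (X j : MvPolynomial (Fin n) K))
    (w : Fin n → ℝ) :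
    (2 ≤ (initialForm w f).support.card → Irreducible (initialForm w f)) ∧
    ((¬ ∃ α : Fin n →₀ ℕ, monomial α (1 : K) ∈ initialIdeal w (Ideal.span {f})) →
      (initialIdeal w (Ideal.span {f})).IsPrime) :=
  stmt1_general S hdisj f hf w
end

section
/- Let R be a K-domain graded by a lattice M, and let ψ : M → Γ be a group homomorphism into a totally ordered abelian group, Q a point of P^1, γ ∈ Γ with γ ≥ 0. Then the map v on the M-graded domain R = ⊕_u R_u with R localizing to K(P^1)[M], defined on homogeneous elements by v(f·χ^u) = ψ(u) + ord_Q(f)·γ and extended to arbitrary nonzero elements by v(f) = min_u v(f_u) over the homogeneous components f_u, is a K-valuation: v(fg) = v(f)+v(g) and v(f+g) ≥ min{v(f), v(g)}. -/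
/-!
Since `γ ≥ 0`, `f ↦ ord_Q(f) • γ` is an additive valuation `ν` on `K(t)`, and `v` is the Gauss
extension of `ν` twisted by `ψ`: `v(f) = min_u (ψ u + ν(f_u))`. The ultrametric inequality holds
coefficientwise, and `v(fg) ≥ v(f) + v(g)` term by term. For the reverse inequality let `A`, `B` be
the exponents at which the minima defining `v(f)`, `v(g)` are attained. As `ℤ^d` has unique sums,
some `a₀ + b₀` with `a₀ ∈ A`, `b₀ ∈ B` arises from exactly one pair of `A × B`; in the coefficient
of `fg` at `a₀ + b₀` every term other than `f_{a₀} g_{b₀}` then has strictly larger valuation.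
-/

/-- The order of vanishing of a rational function at a point of `ℙ¹`,
modeled as `Option K`: `some c` is the finite point `c`, `none` is `∞`. -/
noncomputable def ordAt {K : Type*} [Field K] (Q : Option K) (f : RatFunc K) : ℤ :=
  match Q with
  | some c => (f.num.rootMultiplicity c : ℤ) - (f.denom.rootMultiplicity c : ℤ)
  | none => -f.intDegree

namespace AddValuation

variable {R Γ : Type*} [Ring R] [AddCommGroup Γ] [LinearOrder Γ] [IsOrderedAddMonoid Γ]
  (ν : AddValuation R (WithTop Γ))

theorem le_coe_add_map_sum {ι : Type*} {s : Finset ι} {x : ι → R} {a : Γ} {c : WithTop Γ}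
    (h : ∀ i ∈ s, c ≤ a + ν (x i)) : c ≤ a + ν (∑ i ∈ s, x i) := by
  refine Finset.sum_induction x (fun y => c ≤ a + ν y) (fun y z hy hz => ?_) ?_ h
  · calc c ≤ min (a + ν y) (a + ν z) := le_min hy hz
      _ = a + min (ν y) (ν z) := min_add_add_left _ _ _
      _ ≤ a + ν (y + z) := by gcongr; exact ν.map_add y z
  · simp

end AddValuation

namespace AddMonoidAlgebra

variable {F M Γ : Type*} [Ring F] [AddMonoid M] [AddCommGroup Γ] [LinearOrder Γ]
  [IsOrderedAddMonoid Γ] (ν : AddValuation F (WithTop Γ)) (ψ : M →+ Γ)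

def gaussVal (f : AddMonoidAlgebra F M) : WithTop Γ :=
  f.coeff.support.inf fun u => ψ u + ν (f.coeff u)

def leadingSupport (f : AddMonoidAlgebra F M) : Finset M :=
  f.coeff.support.filter fun u => ψ u + ν (f.coeff u) = gaussVal ν ψ f

variable {ν ψ}

@[simp]
theorem gaussVal_zero : gaussVal ν ψ (0 : AddMonoidAlgebra F M) = ⊤ := by
  simp [gaussVal]

theorem le_gaussVal_iff {f : AddMonoidAlgebra F M} {c : WithTop Γ} :
    c ≤ gaussVal ν ψ f ↔ ∀ u, c ≤ ψ u + ν (f.coeff u) := by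
  refine Finset.le_inf_iff.trans ⟨fun h u => ?_, fun h u _ => h u⟩
  by_cases hu : u ∈ f.coeff.support
  · exact h u hu
  · simp [Finsupp.notMem_support_iff.mp hu]

theorem gaussVal_le (f : AddMonoidAlgebra F M) (u : M) :
    gaussVal ν ψ f ≤ ψ u + ν (f.coeff u) :=
  le_gaussVal_iff.mp le_rfl u

theorem min_le_gaussVal_add (f g : AddMonoidAlgebra F M) :
    min (gaussVal ν ψ f) (gaussVal ν ψ g) ≤ gaussVal ν ψ (f + g) := by
  refine le_gaussVal_iff.mpr fun u => ?_
  calc min (gaussVal ν ψ f) (gaussVal ν ψ g)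
      ≤ min (ψ u + ν (f.coeff u)) (ψ u + ν (g.coeff u)) :=
        min_le_min (gaussVal_le f u) (gaussVal_le g u)
    _ = ψ u + min (ν (f.coeff u)) (ν (g.coeff u)) := min_add_add_left _ _ _
    _ ≤ ψ u + ν ((f + g).coeff u) := by gcongr; exact ν.map_add _ _

theorem coe_add_map_mul_of_add_eq {u u' w : M} (h : u + u' = w) (a b : F) :
    (ψ w : WithTop Γ) + ν (a * b) = (ψ u + ν a) + (ψ u' + ν b) := by
  rw [← h, map_add, ν.map_mul, WithTop.coe_add, add_add_add_comm]

theorem coeff_mul_eq_sum_product [DecidableEq M] (f g : AddMonoidAlgebra F M) (w : M) :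
    (f * g).coeff w = ∑ p ∈ f.coeff.support ×ˢ g.coeff.support,
      if p.1 + p.2 = w then f.coeff p.1 * g.coeff p.2 else 0 := by
  rw [coeff_mul, Finsupp.sum, Finset.sum_product]
  rfl

theorem add_le_gaussVal_mul (f g : AddMonoidAlgebra F M) :
    gaussVal ν ψ f + gaussVal ν ψ g ≤ gaussVal ν ψ (f * g) := by
  classical
  refine le_gaussVal_iff.mpr fun w => ?_
  rw [coeff_mul_eq_sum_product]
  refine ν.le_coe_add_map_sum fun p _ => ?_
  split_ifs with h
  · rw [coe_add_map_mul_of_add_eq h]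
    exact add_le_add (gaussVal_le f _) (gaussVal_le g _)
  · simp

theorem leadingSupport_nonempty {f : AddMonoidAlgebra F M} (hf : f ≠ 0) :
    (leadingSupport ν ψ f).Nonempty := by
  obtain ⟨u, hu, h⟩ := Finset.exists_mem_eq_inf _
    (Finsupp.support_nonempty_iff.mpr (mt coeff_eq_zero.mp hf)) fun u => ψ u + ν (f.coeff u)
  exact ⟨u, Finset.mem_filter.mpr ⟨hu, h.symm⟩⟩

theorem gaussVal_lt_of_notMem_leadingSupport {f : AddMonoidAlgebra F M} {u : M}
    (hu : u ∈ f.coeff.support) (hu' : u ∉ leadingSupport ν ψ f) :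
    gaussVal ν ψ f < ψ u + ν (f.coeff u) :=
  (gaussVal_le f u).lt_of_ne fun h => hu' (Finset.mem_filter.mpr ⟨hu, h.symm⟩)

theorem coe_add_map_coeff_mul_of_uniqueAdd {f g : AddMonoidAlgebra F M} {a₀ b₀ : M}
    (hf : gaussVal ν ψ f ≠ ⊤) (hg : gaussVal ν ψ g ≠ ⊤)
    (ha₀ : a₀ ∈ leadingSupport ν ψ f) (hb₀ : b₀ ∈ leadingSupport ν ψ g)
    (huniq : UniqueAdd (leadingSupport ν ψ f) (leadingSupport ν ψ g) a₀ b₀) :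
    ψ (a₀ + b₀) + ν ((f * g).coeff (a₀ + b₀)) = gaussVal ν ψ f + gaussVal ν ψ g := by
  classical
  obtain ⟨ha, hfa⟩ := Finset.mem_filter.mp ha₀
  obtain ⟨hb, hgb⟩ := Finset.mem_filter.mp hb₀
  have hlead : ψ (a₀ + b₀) + ν (f.coeff a₀ * g.coeff b₀) = gaussVal ν ψ f + gaussVal ν ψ g := by
    rw [coe_add_map_mul_of_add_eq rfl, hfa, hgb]
  have hfin : gaussVal ν ψ f + gaussVal ν ψ g ≠ ⊤ := WithTop.add_ne_top.mpr ⟨hf, hg⟩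
  have hrest : ∀ p ∈ (f.coeff.support ×ˢ g.coeff.support).erase (a₀, b₀),
      ν (f.coeff a₀ * g.coeff b₀) <
        ν (if p.1 + p.2 = a₀ + b₀ then f.coeff p.1 * g.coeff p.2 else 0) := by
    rintro ⟨u, u'⟩ hp
    obtain ⟨hne, hmem⟩ := Finset.mem_erase.mp hp
    obtain ⟨hu, hu'⟩ := Finset.mem_product.mp hmem
    rw [← WithTop.add_lt_add_iff_left (WithTop.coe_ne_top (a := ψ (a₀ + b₀))), hlead]
    split_ifs with h
    · rw [coe_add_map_mul_of_add_eq h]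
      by_cases hA : u ∈ leadingSupport ν ψ f
      · have hB : u' ∉ leadingSupport ν ψ g := fun hB => hne (Prod.ext_iff.mpr (huniq hA hB h))
        exact WithTop.add_lt_add_of_le_of_lt hf (gaussVal_le f u)
          (gaussVal_lt_of_notMem_leadingSupport hu' hB)
      · exact WithTop.add_lt_add_of_lt_of_le hg (gaussVal_lt_of_notMem_leadingSupport hu hA)
          (gaussVal_le g u')
    · simpa using hfin.lt_top
  have hne_top : ν (f.coeff a₀ * g.coeff b₀) ≠ ⊤ := fun h => hfin (by simp [← hlead, h])
  rw [coeff_mul_eq_sum_product, ← Finset.add_sum_erase _ _ (Finset.mk_mem_product ha hb),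
    if_pos rfl, ν.map_add_eq_of_lt_left (ν.map_lt_sum hne_top hrest), hlead]

theorem gaussVal_mul [UniqueSums M] (f g : AddMonoidAlgebra F M) :
    gaussVal ν ψ (f * g) = gaussVal ν ψ f + gaussVal ν ψ g := by
  refine le_antisymm ?_ (add_le_gaussVal_mul f g)
  rcases eq_or_ne (gaussVal ν ψ f) ⊤ with hf | hf
  · simp [hf]
  rcases eq_or_ne (gaussVal ν ψ g) ⊤ with hg | hg
  · simp [hg]
  have hf₀ : f ≠ 0 := by rintro rfl; exact hf gaussVal_zero
  have hg₀ : g ≠ 0 := by rintro rfl; exact hg gaussVal_zero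
  obtain ⟨a₀, ha₀, b₀, hb₀, huniq⟩ := UniqueSums.uniqueAdd_of_nonempty
    (leadingSupport_nonempty (ν := ν) (ψ := ψ) hf₀)
    (leadingSupport_nonempty (ν := ν) (ψ := ψ) hg₀)
  exact (gaussVal_le _ (a₀ + b₀)).trans_eq (coe_add_map_coeff_mul_of_uniqueAdd hf hg ha₀ hb₀ huniq)

theorem gaussVal_single (u : M) (a : F) : gaussVal ν ψ (single u a) = ψ u + ν a := by
  classical
  by_cases ha : a = 0
  · simp [ha]
  · simp [gaussVal, coeff_single, Finsupp.support_single u ha]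

theorem gaussVal_one : gaussVal ν ψ (1 : AddMonoidAlgebra F M) = 0 := by
  simp [one_def, gaussVal_single]

variable (ν ψ) in
noncomputable def gaussValuation [UniqueSums M] :
    AddValuation (AddMonoidAlgebra F M) (WithTop Γ) :=
  AddValuation.of (gaussVal ν ψ) gaussVal_zero gaussVal_one min_le_gaussVal_add gaussVal_mul

end AddMonoidAlgebra

open Polynomial

section RatFunc

variable {K : Type*} [Field K]

noncomputable def ordAtPoly : Option K → K[X] → ℤ
  | some c, p => p.rootMultiplicity c
  | none, p => -p.natDegree

theorem ordAtPoly_mul (Q : Option K) {p q : K[X]} (hp : p ≠ 0) (hq : q ≠ 0) :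
    ordAtPoly Q (p * q) = ordAtPoly Q p + ordAtPoly Q q := by
  cases Q with
  | some c => simp [ordAtPoly, rootMultiplicity_mul (mul_ne_zero hp hq)]
  | none => simp only [ordAtPoly, natDegree_mul hp hq, Nat.cast_add]; ring

theorem min_le_ordAtPoly_add (Q : Option K) {p q : K[X]} (hpq : p + q ≠ 0) :
    min (ordAtPoly Q p) (ordAtPoly Q q) ≤ ordAtPoly Q (p + q) := by
  cases Q with
  | some c =>
    simp only [ordAtPoly]
    exact_mod_cast rootMultiplicity_add c hpq
  | none =>
    have := natDegree_add_le p q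
    simp only [ordAtPoly]
    omega

theorem ordAt_eq_sub (Q : Option K) (f : RatFunc K) :
    ordAt Q f = ordAtPoly Q f.num - ordAtPoly Q f.denom := by
  cases Q with
  | some c => rfl
  | none => simp only [ordAt, ordAtPoly, RatFunc.intDegree]; ring

theorem ordAt_eq_of_num_mul_eq (Q : Option K) {f : RatFunc K} (hf : f ≠ 0) {p q : K[X]}
    (hp : p ≠ 0) (hq : q ≠ 0) (h : f.num * q = p * f.denom) :
    ordAt Q f = ordAtPoly Q p - ordAtPoly Q q := by
  have := congrArg (ordAtPoly Q) h
  rw [ordAtPoly_mul Q (RatFunc.num_ne_zero hf) hq, ordAtPoly_mul Q hp f.denom_ne_zero] at this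
  rw [ordAt_eq_sub]
  omega

theorem ordAt_one (Q : Option K) : ordAt Q 1 = 0 := by
  cases Q <;> simp [ordAt]

theorem ordAt_mul (Q : Option K) {f g : RatFunc K} (hf : f ≠ 0) (hg : g ≠ 0) :
    ordAt Q (f * g) = ordAt Q f + ordAt Q g := by
  have hn := RatFunc.num_ne_zero hf
  have hn' := RatFunc.num_ne_zero hg
  rw [ordAt_eq_of_num_mul_eq Q (mul_ne_zero hf hg) (mul_ne_zero hn hn')
      (mul_ne_zero f.denom_ne_zero g.denom_ne_zero) (RatFunc.num_denom_mul f g),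
    ordAtPoly_mul Q hn hn', ordAtPoly_mul Q f.denom_ne_zero g.denom_ne_zero,
    ordAt_eq_sub, ordAt_eq_sub]
  ring

theorem min_le_ordAt_add (Q : Option K) {f g : RatFunc K} (hf : f ≠ 0) (hg : g ≠ 0)
    (hfg : f + g ≠ 0) : min (ordAt Q f) (ordAt Q g) ≤ ordAt Q (f + g) := by
  have hsum := RatFunc.num_mul_denom_add_denom_mul_num_ne_zero hfg
  have hmin := min_le_ordAtPoly_add Q hsum
  rw [ordAt_eq_of_num_mul_eq Q hfg hsum (mul_ne_zero f.denom_ne_zero g.denom_ne_zero)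
      (RatFunc.num_denom_add f g), ordAt_eq_sub, ordAt_eq_sub]
  rw [ordAtPoly_mul Q (RatFunc.num_ne_zero hf) g.denom_ne_zero,
    ordAtPoly_mul Q f.denom_ne_zero (RatFunc.num_ne_zero hg)] at hmin
  rw [ordAtPoly_mul Q f.denom_ne_zero g.denom_ne_zero]
  omega

open Classical in
noncomputable def ordAtValuation (Q : Option K) : AddValuation (RatFunc K) (WithTop ℤ) :=
  AddValuation.of (fun f => if f = 0 then ⊤ else (ordAt Q f : WithTop ℤ)) (if_pos rfl)
    (by simp [ordAt_one])
    (fun f g => by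
      by_cases hf : f = 0
      · simp [hf]
      by_cases hg : g = 0
      · simp [hg]
      by_cases hfg : f + g = 0
      · simp [hfg]
      simp only [hf, hg, hfg, if_false]
      exact_mod_cast min_le_ordAt_add Q hf hg hfg)
    (fun f g => by
      by_cases hf : f = 0
      · simp [hf]
      by_cases hg : g = 0
      · simp [hg]
      simp only [hf, hg, mul_ne_zero hf hg, if_false]
      exact_mod_cast ordAt_mul Q hf hg)

theorem ordAtValuation_of_ne_zero (Q : Option K) {f : RatFunc K} (hf : f ≠ 0) :
    ordAtValuation Q f = ordAt Q f := by
  simp [ordAtValuation, hf]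

variable {Γ : Type*} [AddCommGroup Γ] [LinearOrder Γ] [IsOrderedAddMonoid Γ]

noncomputable def ordAtSMulValuation (Q : Option K) {γ : Γ} (hγ : 0 ≤ γ) :
    AddValuation (RatFunc K) (WithTop Γ) :=
  (ordAtValuation Q).map (zmultiplesHom Γ γ).withTopMap (by rfl)
    (WithTop.monotone_map_iff.mpr (zsmul_left_mono hγ))

theorem ordAtSMulValuation_of_ne_zero (Q : Option K) {γ : Γ} (hγ : 0 ≤ γ) {f : RatFunc K}
    (hf : f ≠ 0) :
    ordAtSMulValuation Q hγ f = (ordAt Q f • γ : Γ) := by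
  show (zmultiplesHom Γ γ).withTopMap (ordAtValuation Q f) = _
  rw [ordAtValuation_of_ne_zero Q hf]
  rfl

end RatFunc

theorem stmt4_general {K : Type*} [Field K] {d : ℕ}
    {Γ : Type*} [AddCommGroup Γ] [LinearOrder Γ] [IsOrderedAddMonoid Γ]
    (ψ : (Fin d →₀ ℤ) →+ Γ) (Q : Option K) (γ : Γ) (hγ : 0 ≤ γ)
    (v : AddMonoidAlgebra (RatFunc K) (Fin d →₀ ℤ) → Γ)
    (hv : ∀ f : AddMonoidAlgebra (RatFunc K) (Fin d →₀ ℤ), ∀ hf : f ≠ 0,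
      v f = (f.coeff.support.inf' (Finsupp.support_nonempty_iff.mpr (mt AddMonoidAlgebra.coeff_eq_zero.mp hf))
        (fun u => ψ u + (ordAt Q (f.coeff u)) • γ))) :
    (∀ f g : AddMonoidAlgebra (RatFunc K) (Fin d →₀ ℤ),
        f ≠ 0 → g ≠ 0 → v (f * g) = v f + v g) ∧
    (∀ f g : AddMonoidAlgebra (RatFunc K) (Fin d →₀ ℤ),
        f ≠ 0 → g ≠ 0 → f + g ≠ 0 → min (v f) (v g) ≤ v (f + g)) := by
  set ν := ordAtSMulValuation Q hγ
  set w := AddMonoidAlgebra.gaussValuation ν ψ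
  have hvw : ∀ f, f ≠ 0 → (v f : WithTop Γ) = w f := by
    intro f hf
    rw [hv f hf, Finset.coe_inf']
    refine Finset.inf_congr rfl fun u hu => ?_
    rw [Function.comp_apply, WithTop.coe_add,
      ordAtSMulValuation_of_ne_zero Q hγ (Finsupp.mem_support_iff.mp hu)]
  refine ⟨fun f g hf hg => WithTop.coe_injective ?_, fun f g hf hg hfg => ?_⟩
  · rw [WithTop.coe_add, hvw _ (mul_ne_zero hf hg), hvw f hf, hvw g hg, w.map_mul]
  · rw [← WithTop.coe_le_coe, WithTop.coe_min, hvw f hf, hvw g hg, hvw _ hfg]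
    exact w.map_add f g

/-- On `R = K(t)[M]` (with `M = ℤ^d`), the map defined on homogeneous elements by
`f·χ^u ↦ ψ(u) + ord_Q(f)·γ` and extended by taking the minimum over homogeneous
components is a valuation: it is multiplicative and satisfies the ultrametric inequality. -/
theorem stmt4 {K : Type*} [Field K] [IsAlgClosed K] {d : ℕ}
    {Γ : Type*} [AddCommGroup Γ] [LinearOrder Γ] [IsOrderedAddMonoid Γ]
    (ψ : (Fin d →₀ ℤ) →+ Γ) (Q : Option K) (γ : Γ) (hγ : 0 ≤ γ)
    (v : AddMonoidAlgebra (RatFunc K) (Fin d →₀ ℤ) → Γ)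
    (hv : ∀ f : AddMonoidAlgebra (RatFunc K) (Fin d →₀ ℤ), ∀ hf : f ≠ 0,
      v f = (f.coeff.support.inf' (Finsupp.support_nonempty_iff.mpr (mt AddMonoidAlgebra.coeff_eq_zero.mp hf))
        (fun u => ψ u + (ordAt Q (f.coeff u)) • γ))) :
    (∀ f g : AddMonoidAlgebra (RatFunc K) (Fin d →₀ ℤ),
        f ≠ 0 → g ≠ 0 → v (f * g) = v f + v g) ∧
    (∀ f g : AddMonoidAlgebra (RatFunc K) (Fin d →₀ ℤ),
        f ≠ 0 → g ≠ 0 → f + g ≠ 0 → min (v f) (v g) ≤ v (f + g)) :=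
  stmt4_general ψ Q γ hγ v hv
end

section
/- With notation as above (σ pointed cone in N_Q, polyhedra Δ_i with tailcone σ, cone C in N_Q × Q^m), a lattice point (u, v) ∈ M × Z^m lies in the dual cone C^∨ if and only if v_i ≥ −Δ_i(u) for all i = 1, …, m and Σ_{i=1}^m v_i ≤ Δ_0(u), where Δ_i(u) := min_{p ∈ Δ_i} ⟨p, u⟩ (and u must lie in σ^∨). -/
open Pointwise

/-- The convex cone spanned by a set: all finite nonnegative rational combinations. -/
noncomputable def coneSpan {E : Type*} [AddCommGroup E] [Module ℚ E] (S : Set E) : Set E :=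
  {x | ∃ (k : ℕ) (c : Fin k → ℚ) (g : Fin k → E),
    (∀ i, 0 ≤ c i) ∧ (∀ i, g i ∈ S) ∧ x = ∑ i, c i • g i}

/-- `ebasis m 0 = e₀ = -(e₁ + ⋯ + e_m)` and `ebasis m (i+1) = eᵢ₊₁`, the standard basis. -/
noncomputable def ebasis (m : ℕ) : Fin (m + 1) → (Fin m → ℚ) :=
  Fin.cases (fun _ => -1) (fun j => Pi.single j 1)

/-- A lattice point `(u, v) ∈ M × ℤ^m` lies in the dual cone `C^∨` if and only if
`u ∈ σ^∨`, `vᵢ ≥ -Δᵢ(u)` for `i = 1, …, m` (i.e. `⟨p,u⟩ ≥ -vᵢ` for all `p ∈ Δᵢ`),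
and `Σᵢ vᵢ ≤ Δ₀(u)` (i.e. `Σᵢ vᵢ ≤ ⟨p,u⟩` for all `p ∈ Δ₀`). -/
theorem stmt7 {d m : ℕ}
    (σ : Set (Fin d → ℚ))
    (Gσ : Finset (Fin d → ℚ)) (hσ : σ = coneSpan ↑Gσ)
    (hσpointed : ∀ x ∈ σ, -x ∈ σ → x = 0)
    (V : Fin (m + 1) → Finset (Fin d → ℚ)) (hV : ∀ i, (V i).Nonempty)
    (Δ : Fin (m + 1) → Set (Fin d → ℚ))
    (hΔ : ∀ i, Δ i = convexHull ℚ ↑(V i) + σ)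
    (C : Set ((Fin d → ℚ) × (Fin m → ℚ)))
    (hC : C = coneSpan ({x | ∃ i p, p ∈ Δ i ∧ x = (p, ebasis m i)} ∪
      {x | ∃ s ∈ σ, x = (s, 0)}))
    (u : Fin d → ℤ) (v : Fin m → ℤ) :
    (∀ x ∈ C, 0 ≤ (∑ j, x.1 j * (u j : ℚ)) + ∑ j, x.2 j * (v j : ℚ)) ↔
      ((∀ s ∈ σ, 0 ≤ ∑ j, s j * (u j : ℚ)) ∧
       (∀ i : Fin m, ∀ p ∈ Δ i.succ, -(v i : ℚ) ≤ ∑ j, p j * (u j : ℚ)) ∧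
       (∀ p ∈ Δ 0, (∑ i, (v i : ℚ)) ≤ ∑ j, p j * (u j : ℚ))) := by
  subst hC
  constructor
  · intro h
    refine ⟨?_, ?_, ?_⟩
    · intro s hs
      have := h (s, 0) ⟨1, fun _ => 1, fun _ => (s, 0), fun _ => zero_le_one,
        fun _ => Or.inr ⟨s, hs, rfl⟩, by simp⟩
      simpa using this
    · intro i p hp
      have := h (p, ebasis m i.succ) ⟨1, fun _ => 1, fun _ => (p, ebasis m i.succ),
        fun _ => zero_le_one, fun _ => Or.inl ⟨i.succ, p, hp, rfl⟩, by simp⟩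
      simp only [ebasis, Fin.cases_succ] at this
      have hsum : (∑ j, (Pi.single i 1 : Fin m → ℚ) j * v j) = v i := by
        simp [Pi.single_apply]
      rw [hsum] at this
      linarith
    · intro p hp
      have := h (p, ebasis m 0) ⟨1, fun _ => 1, fun _ => (p, ebasis m 0),
        fun _ => zero_le_one, fun _ => Or.inl ⟨0, p, hp, rfl⟩, by simp⟩
      simp only [ebasis, Fin.cases_zero] at this
      have hsum : (∑ j, (-1 : ℚ) * v j) = -∑ j, (v j : ℚ) := by
        simp
      rw [hsum] at this
      linarith
  · rintro ⟨h1, h2, h3⟩ x ⟨k, c, g, hc, hg, rfl⟩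
    have key : ∀ i, 0 ≤ (∑ j, (g i).1 j * u j) + ∑ j, (g i).2 j * v j := by
      intro i
      rcases hg i with ⟨i', p, hp, hgi⟩ | ⟨s, hs, hgi⟩
      · rw [hgi]
        induction i' using Fin.cases with
        | zero =>
          have := h3 p hp
          simp only [ebasis, Fin.cases_zero]
          have hsum : (∑ j, (-1 : ℚ) * v j) = -∑ j, (v j : ℚ) := by simp
          rw [hsum]; linarith
        | succ i' =>
          have := h2 i' p hp
          simp only [ebasis, Fin.cases_succ]
          have hsum : (∑ j, (Pi.single i' 1 : Fin m → ℚ) j * v j) = v i' := by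
            simp [Pi.single_apply]
          rw [hsum]; linarith
      · rw [hgi]
        simpa using h1 s hs
    have expand : ((∑ j, (∑ i, c i • g i).1 j * u j) + ∑ j, (∑ i, c i • g i).2 j * v j)
        = ∑ i, c i * ((∑ j, (g i).1 j * u j) + ∑ j, (g i).2 j * v j) := by
      simp only [Prod.fst_sum, Prod.snd_sum, Prod.smul_fst, Prod.smul_snd,
        Finset.sum_apply, Pi.smul_apply, smul_eq_mul, Finset.sum_mul, mul_add,
        Finset.mul_sum, Finset.sum_add_distrib]
      congr 1
      · rw [Finset.sum_comm]
        exact Finset.sum_congr rfl fun _ _ => Finset.sum_congr rfl fun _ _ => by ring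
      · rw [Finset.sum_comm]
        exact Finset.sum_congr rfl fun _ _ => Finset.sum_congr rfl fun _ _ => by ring
    rw [expand]
    exact Finset.sum_nonneg fun i _ => mul_nonneg (hc i) (key i)
end

section
/- Fix lattices M ≅ Z^d and a pointed cone σ^∨ ⊂ M_R, rational numbers given via support functions Δ_i(u) of polyhedra Δ_0,…,Δ_m with common pointed tailcone σ satisfying Σ_i Δ_i ⊊ σ. Fix an index j. Then the set S = { (u, v) ∈ (σ^∨ ∩ M) × Z : −⌊Δ_j(u)⌋ ≤ v ≤ Σ_{i≠j} ⌊Δ_i(u)⌋ } is a finitely generated subsemigroup of M × Z. -/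
/-!
Write a point of `ℤ^d × ℤ × ℤ^(m+1)` as `(u, v, w)`. For integral `v` and `w`, the inequalities
`⟨p, u⟩ + v ≥ 0` for `p ∈ V j` say `-⌊Δ_j(u)⌋ ≤ v`, and `w_i ≤ ⟨p, u⟩` for `p ∈ V i` say
`w_i ≤ ⌊Δ_i(u)⌋`. Together with `⟨s, u⟩ ≥ 0` for the generators `s` of `σ` and `v ≤ ∑_{i ≠ j} w_i`
they cut out a rational polyhedral cone whose lattice points project onto `S` under
`(u, v, w) ↦ (u, v)`. By Gordan's lemma these lattice points form a finitely generated monoid, hence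
so does `S`.

Gordan's lemma is reduced to Dickson's lemma: after clearing denominators, writing `x = x⁺ - x⁻`
and adding slack variables, the lattice points become the image of a subset of `ℕ^N` that is closed
under truncated subtraction, and such a subset is generated by its finitely many minimal nonzero
elements.
-/

open Pointwise

/-- The support function `Δᵢ(u) = min_{p ∈ Δᵢ} ⟨p, u⟩`, computed on the vertex set. -/
noncomputable def suppFn {d : ℕ} (V : Finset (Fin d → ℚ)) (hV : V.Nonempty)
    (u : Fin d → ℤ) : ℚ :=
  V.inf' hV (fun p => ∑ j, p j * (u j : ℚ))

theorem exists_finset_subset_closure_of_tsub_mem {α : Type*} [AddCommMonoid α] [PartialOrder α]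
    [CanonicallyOrderedAdd α] [Sub α] [OrderedSub α] [IsCancelAdd α] [WellQuasiOrderedLE α]
    {U : Set α} (hU : ∀ a ∈ U, ∀ b ∈ U, a ≤ b → b - a ∈ U) :
    ∃ F : Finset α, ↑F ⊆ U ∧ U ⊆ AddSubmonoid.closure (F : Set α) := by
  set P : α → Prop := fun a => a ∈ U ∧ a ≠ 0
  have hfin : {a | Minimal P a}.Finite :=
    (setOfPred_minimal_antichain P).finite_of_partiallyWellOrderedOn
      (Set.isPWO_of_wellQuasiOrderedLE _)
  refine ⟨hfin.toFinset, fun a ha => (Set.Finite.mem_toFinset hfin).1 ha |>.prop.1, ?_⟩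
  intro b
  induction b using WellFoundedLT.induction with
  | _ b ih =>
  intro hb
  obtain rfl | hb0 := eq_or_ne b 0
  · exact zero_mem _
  obtain ⟨a, hab, ha⟩ := exists_minimal_le_of_wellFoundedLT P b ⟨hb, hb0⟩
  have hlt : b - a < b := by
    refine tsub_le_self.lt_of_ne fun h => ha.prop.2 (add_right_cancel (b := b - a) ?_)
    rw [add_tsub_cancel_of_le hab, zero_add, h]
  rw [← add_tsub_cancel_of_le hab]
  exact add_mem (AddSubmonoid.subset_closure (by simpa using ha))
    (ih _ hlt (hU a ha.prop.1 b hb hab))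

section Gordan

variable {ι κ : Type*}

def signedPart : ((ι ⊕ ι) ⊕ κ → ℕ) →+ (ι → ℤ) :=
  AddMonoidHom.mk' (fun c i => (c (.inl (.inl i)) : ℤ) - c (.inl (.inr i))) fun a b => by
    funext i; simp only [Pi.add_apply, Nat.cast_add]; ring

theorem signedPart_tsub {a b : (ι ⊕ ι) ⊕ κ → ℕ} (hab : a ≤ b) :
    signedPart (b - a) = signedPart b - signedPart a := by
  funext i
  simp only [signedPart, AddMonoidHom.mk'_apply, Pi.sub_apply, Nat.cast_sub (hab _)]
  ring

variable [Fintype ι]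

def latticeCone (ℓ : κ → ι → ℚ) : AddSubmonoid (ι → ℤ) where
  carrier := {x | ∀ t, 0 ≤ ∑ i, ℓ t i * x i}
  add_mem' {x y} hx hy t := by
    simpa only [Pi.add_apply, Int.cast_add, mul_add, Finset.sum_add_distrib] using
      add_nonneg (hx t) (hy t)
  zero_mem' t := by simp

theorem mem_latticeCone {ℓ : κ → ι → ℚ} {x : ι → ℤ} :
    x ∈ latticeCone ℓ ↔ ∀ t, 0 ≤ ∑ i, ℓ t i * x i := Iff.rfl

theorem mem_latticeCone_intCast {A : κ → ι → ℤ} {x : ι → ℤ} :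
    x ∈ latticeCone (fun t i => (A t i : ℚ)) ↔ ∀ t, 0 ≤ ∑ i, A t i * x i := by
  simp only [mem_latticeCone]
  exact_mod_cast Iff.rfl

variable [Fintype κ]

theorem latticeCone_intCast_fg (A : κ → ι → ℤ) :
    (latticeCone fun t i => (A t i : ℚ)).FG := by
  set U : Set ((ι ⊕ ι) ⊕ κ → ℕ) :=
    {c | ∀ t, ∑ i, A t i * signedPart c i = c (.inr t)}
  have hU : ∀ a ∈ U, ∀ b ∈ U, a ≤ b → b - a ∈ U := by
    intro a ha b hb hab t
    rw [signedPart_tsub hab, Pi.sub_apply, Nat.cast_sub (hab _), ← ha t, ← hb t]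
    simp only [Pi.sub_apply, mul_sub, Finset.sum_sub_distrib]
  obtain ⟨F, hFU, hUF⟩ := exists_finset_subset_closure_of_tsub_mem hU
  refine ⟨F.image signedPart, ?_⟩
  rw [Finset.coe_image, ← AddMonoidHom.map_mclosure]
  apply le_antisymm
  · refine AddSubmonoid.map_le_iff_le_comap.2 (AddSubmonoid.closure_le.2 fun c hc => ?_)
    refine mem_latticeCone_intCast.2 fun t => ?_
    rw [hFU hc t]
    exact Int.natCast_nonneg _
  · intro x hx
    rw [mem_latticeCone_intCast] at hx
    set c : (ι ⊕ ι) ⊕ κ → ℕ :=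
      Sum.elim (Sum.elim (fun i => (x i).toNat) (fun i => (-x i).toNat))
        (fun t => (∑ i, A t i * x i).toNat)
    have hc : signedPart c = x := by
      funext i; simp [c, signedPart]
    refine ⟨c, hUF fun t => ?_, hc⟩
    simp [hc, c, Int.toNat_of_nonneg (hx t)]

theorem exists_pos_nat_mul_eq_intCast (q : ι → ℚ) :
    ∃ D : ℕ, 0 < D ∧ ∃ c : ι → ℤ, ∀ i, (c i : ℚ) = D * q i := by
  choose e he using fun i => Finset.dvd_prod_of_mem (fun i => (q i).den) (Finset.mem_univ i)
  refine ⟨∏ i, (q i).den, Finset.prod_pos fun i _ => (q i).den_pos,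
    fun i => (q i).num * e i, fun i => ?_⟩
  rw [he i]
  push_cast
  rw [← Rat.mul_den_eq_num]
  ring

theorem latticeCone_fg (ℓ : κ → ι → ℚ) :
    (latticeCone ℓ).FG := by
  choose D hD c hc using fun t => exists_pos_nat_mul_eq_intCast (ℓ t)
  convert latticeCone_intCast_fg c using 1
  ext x
  refine forall_congr' fun t => ?_
  simp only [hc, mul_assoc, ← Finset.mul_sum]
  exact (mul_nonneg_iff_of_pos_left (Nat.cast_pos.2 (hD t))).symm

end Gordan

theorem forall_mem_coneSpan_nonneg_iff {E : Type*} [AddCommGroup E] [Module ℚ E] {G : Set E}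
    (φ : E →ₗ[ℚ] ℚ) : (∀ s ∈ coneSpan G, 0 ≤ φ s) ↔ ∀ s ∈ G, 0 ≤ φ s := by
  refine ⟨fun h s hs => h s ⟨1, fun _ => 1, fun _ => s, fun _ => zero_le_one, fun _ => hs, by simp⟩,
    ?_⟩
  rintro h _ ⟨k, c, g, hc, hg, rfl⟩
  simp only [map_sum, map_smul, smul_eq_mul]
  exact Finset.sum_nonneg fun i _ => mul_nonneg (hc i) (h _ (hg i))

theorem le_floor_suppFn_iff {d : ℕ} {V : Finset (Fin d → ℚ)} (hV : V.Nonempty) {u : Fin d → ℤ}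
    {n : ℤ} : n ≤ ⌊suppFn V hV u⌋ ↔ ∀ p ∈ V, (n : ℚ) ≤ ∑ k, p k * u k := by
  rw [Int.le_floor, suppFn, Finset.le_inf'_iff]

section Lift

variable {d n : ℕ}

-- coordinates `(u, v, w)` of the header: `u` on `inl`, `v` on `inr none`, `w i` on `inr (some i)`
def linForm (p : Fin d → ℚ) (a : ℚ) (b : Fin n → ℚ) : Fin d ⊕ Option (Fin n) → ℚ :=
  Sum.elim p fun o => o.elim a b

theorem sum_linForm_mul (p : Fin d → ℚ) (a : ℚ) (b : Fin n → ℚ) (x : Fin d ⊕ Option (Fin n) → ℤ) :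
    ∑ i, linForm p a b i * x i =
      ∑ k, p k * x (.inl k) + a * x (.inr none) + ∑ i, b i * x (.inr (some i)) := by
  simp [linForm, Fintype.sum_sum_type, Fintype.sum_option, add_assoc]

variable (G : Finset (Fin d → ℚ)) (V : Fin n → Finset (Fin d → ℚ)) (j : Fin n)

def liftRows : (G ⊕ V j) ⊕ ((Σ i, V i) ⊕ Unit) → Fin d ⊕ Option (Fin n) → ℚ
  | .inl (.inl s) => linForm s 0 0
  | .inl (.inr p) => linForm p 1 0
  | .inr (.inl ⟨i, p⟩) => linForm p 0 (-Pi.single i 1)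
  | .inr (.inr _) => linForm 0 (-1) fun i => if i = j then 0 else 1

theorem mem_latticeCone_liftRows {x : Fin d ⊕ Option (Fin n) → ℤ} :
    x ∈ latticeCone (liftRows G V j) ↔
      (∀ s ∈ G, 0 ≤ ∑ k, s k * (x (.inl k) : ℚ)) ∧
      (∀ p ∈ V j, 0 ≤ ∑ k, p k * (x (.inl k) : ℚ) + x (.inr none)) ∧
      (∀ i, ∀ p ∈ V i, (x (.inr (some i)) : ℚ) ≤ ∑ k, p k * (x (.inl k) : ℚ)) ∧
      x (.inr none) ≤ ∑ i ∈ Finset.univ.filter (fun i => i ≠ j), x (.inr (some i)) := by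
  have hsingle : ∀ i, ∑ i', (-Pi.single i 1 : Fin n → ℚ) i' * x (.inr (some i')) =
      -x (.inr (some i)) := by
    intro i; simp [Pi.single_apply]
  have hfilter : ∑ i, (if i = j then 0 else 1 : ℚ) * x (.inr (some i)) =
      ∑ i ∈ Finset.univ.filter (fun i => i ≠ j), (x (.inr (some i)) : ℚ) := by
    rw [Finset.sum_filter]
    exact Finset.sum_congr rfl fun i _ => by by_cases h : i = j <;> simp [h]
  simp only [mem_latticeCone, Sum.forall, Sigma.forall, Subtype.forall, liftRows,
    sum_linForm_mul, hsingle, hfilter, Pi.zero_apply, zero_mul, one_mul, Finset.sum_const_zero,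
    add_zero, and_assoc, ← sub_eq_add_neg, sub_nonneg, neg_one_mul, forall_const, zero_sub,
    neg_add_eq_sub, ← Int.cast_sum, Int.cast_le]

def liftProj : (Fin d ⊕ Option (Fin n) → ℤ) →+ (Fin d → ℤ) × ℤ :=
  AddMonoidHom.mk' (fun x => (fun k => x (.inl k), x (.inr none))) fun _ _ => rfl

theorem coe_map_liftProj_latticeCone_liftRows (hV : ∀ i, (V i).Nonempty) :
    ((latticeCone (liftRows G V j)).map liftProj : Set ((Fin d → ℤ) × ℤ)) = {y : (Fin d → ℤ) × ℤ |
      (∀ s ∈ G, 0 ≤ ∑ k, s k * (y.1 k : ℚ)) ∧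
      -⌊suppFn (V j) (hV j) y.1⌋ ≤ y.2 ∧
      y.2 ≤ ∑ i ∈ Finset.univ.filter (fun i => i ≠ j), ⌊suppFn (V i) (hV i) y.1⌋} := by
  ext ⟨u, v⟩
  rw [AddSubmonoid.coe_map]
  constructor
  · rintro ⟨x, hx, hxy⟩
    obtain ⟨hG, hj, hw, hv⟩ := (mem_latticeCone_liftRows G V j).1 hx
    obtain ⟨rfl, rfl⟩ := Prod.ext_iff.1 hxy
    refine ⟨hG, neg_le.2 ((le_floor_suppFn_iff _).2 fun p hp => ?_), hv.trans ?_⟩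
    · push_cast
      exact neg_le_iff_add_nonneg.2 (hj p hp)
    · exact Finset.sum_le_sum fun i _ => (le_floor_suppFn_iff _).2 (hw i)
  · rintro ⟨hG, hj, hv⟩
    refine ⟨Sum.elim u fun o => o.elim v fun i => ⌊suppFn (V i) (hV i) u⌋,
      (mem_latticeCone_liftRows G V j).2 ⟨hG, fun p hp => ?_,
        fun i => (le_floor_suppFn_iff _).1 le_rfl, hv⟩, rfl⟩
    have := (le_floor_suppFn_iff _).1 (neg_le.1 hj) p hp
    push_cast at this
    simp only [Sum.elim_inl, Sum.elim_inr, Option.elim]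
    linarith

end Lift

theorem stmt9_general {d m : ℕ}
    (σ : Set (Fin d → ℚ))
    (Gσ : Finset (Fin d → ℚ)) (hσ : σ = coneSpan ↑Gσ)
    (V : Fin (m + 1) → Finset (Fin d → ℚ)) (hV : ∀ i, (V i).Nonempty)
    (j : Fin (m + 1))
    (S : Set ((Fin d → ℤ) × ℤ))
    (hS : S = {x : (Fin d → ℤ) × ℤ |
      (∀ s ∈ σ, 0 ≤ ∑ k, s k * (x.1 k : ℚ)) ∧
      -⌊suppFn (V j) (hV j) x.1⌋ ≤ x.2 ∧
      x.2 ≤ ∑ i ∈ Finset.univ.filter (fun i => i ≠ j), ⌊suppFn (V i) (hV i) x.1⌋}) :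
    (∀ x ∈ S, ∀ y ∈ S, x + y ∈ S) ∧
    (∃ F : Finset ((Fin d → ℤ) × ℤ), (↑F : Set ((Fin d → ℤ) × ℤ)) ⊆ S ∧
      ∀ x ∈ S, x ∈ AddSubmonoid.closure (↑F : Set ((Fin d → ℤ) × ℤ))) := by
  have hS_map : S = (latticeCone (liftRows Gσ V j)).map liftProj := by
    rw [hS, coe_map_liftProj_latticeCone_liftRows Gσ V j hV, hσ]
    ext x
    exact and_congr_left' (forall_mem_coneSpan_nonneg_iff ((dotProductBilin ℚ ℚ).flip (x.1 ·)))
  obtain ⟨F, hF⟩ := (latticeCone_fg (liftRows Gσ V j)).map liftProj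
  subst hS_map
  exact ⟨fun x hx y hy => add_mem hx hy, F, hF ▸ AddSubmonoid.subset_closure,
    fun x hx => hF ▸ hx⟩

/-- The set `S = {(u,v) ∈ (σ^∨ ∩ M) × ℤ : -⌊Δⱼ(u)⌋ ≤ v ≤ Σ_{i ≠ j} ⌊Δᵢ(u)⌋}` is a
finitely generated subsemigroup of `M × ℤ`. -/
theorem stmt9 {d m : ℕ}
    (σ : Set (Fin d → ℚ))
    (Gσ : Finset (Fin d → ℚ)) (hσ : σ = coneSpan ↑Gσ)
    (hσpointed : ∀ x ∈ σ, -x ∈ σ → x = 0)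
    (V : Fin (m + 1) → Finset (Fin d → ℚ)) (hV : ∀ i, (V i).Nonempty)
    (Δ : Fin (m + 1) → Set (Fin d → ℚ))
    (hΔ : ∀ i, Δ i = convexHull ℚ ↑(V i) + σ)
    (hsum : (∀ p : Fin (m + 1) → (Fin d → ℚ), (∀ i, p i ∈ Δ i) → (∑ i, p i) ∈ σ) ∧
      {x | ∃ p : Fin (m + 1) → (Fin d → ℚ), (∀ i, p i ∈ Δ i) ∧ x = ∑ i, p i} ≠ σ)
    (j : Fin (m + 1))
    (S : Set ((Fin d → ℤ) × ℤ))
    (hS : S = {x : (Fin d → ℤ) × ℤ |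
      (∀ s ∈ σ, 0 ≤ ∑ k, s k * (x.1 k : ℚ)) ∧
      -⌊suppFn (V j) (hV j) x.1⌋ ≤ x.2 ∧
      x.2 ≤ ∑ i ∈ Finset.univ.filter (fun i => i ≠ j), ⌊suppFn (V i) (hV i) x.1⌋}) :
    (∀ x ∈ S, ∀ y ∈ S, x + y ∈ S) ∧
    (∃ F : Finset ((Fin d → ℤ) × ℤ), (↑F : Set ((Fin d → ℤ) × ℤ)) ⊆ S ∧
      ∀ x ∈ S, x ∈ AddSubmonoid.closure (↑F : Set ((Fin d → ℤ) × ℤ))) :=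
  stmt9_general σ Gσ hσ V hV j S hS
end
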